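/- arXiv:quant-ph/0006125 — 6 statements merged into one kernel-verified Lean document; each statement's English description precedes it below -/
import Mathlib

section
/- For a tripartite qubit state |Ψ⟩ = a|000⟩ + b|011⟩ + c|111⟩ with |a|² + |b|² + |c|² = 1 and |a| > 1/√2, the maximum of |⟨Ψ|(|φ⁽¹⁾⟩⊗|φ⁽²⁾⟩⊗|φ⁽³⁾⟩)|² over unit vectors |φ⁽ʳ⁾⟩ in ℂ² equals |a|², attained at |φ⁽¹⁾⟩=|φ⁽²⁾⟩=|φ⁽³⁾⟩=|0⟩. -/
private lemma aux_qr (q q' r r' : ℝ) (hv : q ^ 2 + q' ^ 2 = 1) (hw : r ^ 2 + r' ^ 2 = 1) :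
    q * r + q' * r' ≤ 1 := by
  nlinarith [sq_nonneg (q - r), sq_nonneg (q' - r')]

private lemma aux_bound (α t p q q' r r' : ℝ) (hα : 0 ≤ α) (ht : 0 ≤ t) (htα : t ≤ α)
    (hp : 0 ≤ p) (hp1 : p ≤ 1) (hq : 0 ≤ q) (hq' : 0 ≤ q') (hr : 0 ≤ r) (hr' : 0 ≤ r')
    (hqr : q * r + q' * r' ≤ 1) :
    α * p * q * r + t * (q' * r') ≤ α := by
  nlinarith [mul_nonneg (mul_nonneg hα (sub_nonneg.mpr hp1)) (mul_nonneg hq hr),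
    mul_nonneg (sub_nonneg.mpr htα) (mul_nonneg hq' hr'),
    mul_nonneg hα (sub_nonneg.mpr hqr)]

private lemma aux_t (α β γ p p' : ℝ) (hα : 0 ≤ α) (hβ : 0 ≤ β) (hγ : 0 ≤ γ)
    (hp : 0 ≤ p) (hp' : 0 ≤ p') (hnorm : α ^ 2 + β ^ 2 + γ ^ 2 = 1)
    (hu : p ^ 2 + p' ^ 2 = 1) (hα2 : 1 / 2 < α ^ 2) :
    β * p + γ * p' ≤ α := by
  have hsq : (β * p + γ * p') ^ 2 ≤ α ^ 2 := by
    nlinarith [sq_nonneg (β * p' - γ * p)]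
  have hnn : 0 ≤ β * p + γ * p' := by positivity
  exact (pow_le_pow_iff_left₀ hnn hα (by norm_num)).mp hsq

/-- For the tripartite qubit state `Ψ = a|000⟩ + b|011⟩ + c|111⟩` with
`|a|² + |b|² + |c|² = 1` and `|a| > 1/√2`, the maximum of
`|⟨Ψ|φ⁽¹⁾⊗φ⁽²⁾⊗φ⁽³⁾⟩|²` over unit vectors in `ℂ²` equals `|a|²`,
attained at `φ⁽¹⁾ = φ⁽²⁾ = φ⁽³⁾ = |0⟩`. -/
theorem tripartite_max_overlap (a b c : ℂ)
    (hnorm : ‖a‖ ^ 2 + ‖b‖ ^ 2 + ‖c‖ ^ 2 = 1)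
    (ha : 1 / Real.sqrt 2 < ‖a‖) :
    IsGreatest
      {x : ℝ | ∃ u v w : Fin 2 → ℂ,
        (∑ i, ‖u i‖ ^ 2) = 1 ∧
        (∑ i, ‖v i‖ ^ 2) = 1 ∧
        (∑ i, ‖w i‖ ^ 2) = 1 ∧
        x = ‖(starRingEnd ℂ) a * u 0 * v 0 * w 0 +
              (starRingEnd ℂ) b * u 0 * v 1 * w 1 +
              (starRingEnd ℂ) c * u 1 * v 1 * w 1‖ ^ 2}
      (‖a‖ ^ 2) ∧
    ‖(starRingEnd ℂ) a * (![1,0] : Fin 2 → ℂ) 0 * (![1,0] : Fin 2 → ℂ) 0 * (![1,0] : Fin 2 → ℂ) 0 +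
        (starRingEnd ℂ) b * (![1,0] : Fin 2 → ℂ) 0 * (![1,0] : Fin 2 → ℂ) 1 * (![1,0] : Fin 2 → ℂ) 1 +
        (starRingEnd ℂ) c * (![1,0] : Fin 2 → ℂ) 1 * (![1,0] : Fin 2 → ℂ) 1 * (![1,0] : Fin 2 → ℂ) 1‖ ^ 2
      = ‖a‖ ^ 2 := by
  have hα0 : 0 ≤ ‖a‖ := norm_nonneg a
  have hα2 : 1 / 2 < ‖a‖ ^ 2 := by
    have h2 : (0:ℝ) ≤ 1 / Real.sqrt 2 := by positivity
    have := pow_lt_pow_left₀ ha h2 (by norm_num : 2 ≠ 0)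
    calc (1:ℝ)/2 = (1 / Real.sqrt 2) ^ 2 := by
          rw [div_pow, one_pow, Real.sq_sqrt (by norm_num : (0:ℝ) ≤ 2)]
      _ < _ := this
  have hattain : ‖(starRingEnd ℂ) a * (![1,0] : Fin 2 → ℂ) 0 * (![1,0] : Fin 2 → ℂ) 0 * (![1,0] : Fin 2 → ℂ) 0 +
        (starRingEnd ℂ) b * (![1,0] : Fin 2 → ℂ) 0 * (![1,0] : Fin 2 → ℂ) 1 * (![1,0] : Fin 2 → ℂ) 1 +
        (starRingEnd ℂ) c * (![1,0] : Fin 2 → ℂ) 1 * (![1,0] : Fin 2 → ℂ) 1 * (![1,0] : Fin 2 → ℂ) 1‖ ^ 2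
      = ‖a‖ ^ 2 := by
    simp [Complex.norm_conj]
  refine ⟨⟨⟨![1,0], ![1,0], ![1,0], ?_, ?_, ?_, hattain.symm⟩, ?_⟩, hattain⟩
  · simp [Fin.sum_univ_two]
  · simp [Fin.sum_univ_two]
  · simp [Fin.sum_univ_two]
  · rintro x ⟨u, v, w, hu, hv, hw, rfl⟩
    simp only [Fin.sum_univ_two] at hu hv hw
    set α := ‖a‖ with hαdef
    set β := ‖b‖
    set γ := ‖c‖
    set p := ‖u 0‖
    set p' := ‖u 1‖
    set q := ‖v 0‖
    set q' := ‖v 1‖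
    set r := ‖w 0‖
    set r' := ‖w 1‖
    have hβ : 0 ≤ β := norm_nonneg b
    have hγ : 0 ≤ γ := norm_nonneg c
    have hp : 0 ≤ p := norm_nonneg _
    have hp' : 0 ≤ p' := norm_nonneg _
    have hq : 0 ≤ q := norm_nonneg _
    have hq' : 0 ≤ q' := norm_nonneg _
    have hr : 0 ≤ r := norm_nonneg _
    have hr' : 0 ≤ r' := norm_nonneg _
    -- triangle inequality
    have htri : ‖(starRingEnd ℂ) a * u 0 * v 0 * w 0 +
              (starRingEnd ℂ) b * u 0 * v 1 * w 1 +
              (starRingEnd ℂ) c * u 1 * v 1 * w 1‖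
        ≤ α * p * q * r + (β * p + γ * p') * (q' * r') := by
      have heq : (starRingEnd ℂ) a * u 0 * v 0 * w 0 +
              (starRingEnd ℂ) b * u 0 * v 1 * w 1 +
              (starRingEnd ℂ) c * u 1 * v 1 * w 1
          = (starRingEnd ℂ) a * u 0 * v 0 * w 0 +
            ((starRingEnd ℂ) b * u 0 + (starRingEnd ℂ) c * u 1) * (v 1 * w 1) := by ring
      rw [heq]
      calc ‖_‖ ≤ ‖(starRingEnd ℂ) a * u 0 * v 0 * w 0‖ +
            ‖((starRingEnd ℂ) b * u 0 + (starRingEnd ℂ) c * u 1) * (v 1 * w 1)‖ :=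
          norm_add_le _ _
        _ ≤ α * p * q * r + (β * p + γ * p') * (q' * r') := by
            have h1 : ‖(starRingEnd ℂ) a * u 0 * v 0 * w 0‖ = α * p * q * r := by
              simp [map_mul, Complex.norm_conj]; rfl
            have h2 : ‖(starRingEnd ℂ) b * u 0 + (starRingEnd ℂ) c * u 1‖
                ≤ β * p + γ * p' := by
              calc ‖_‖ ≤ ‖(starRingEnd ℂ) b * u 0‖ +
                    ‖(starRingEnd ℂ) c * u 1‖ := norm_add_le _ _
                _ = β * p + γ * p' := by simp [map_mul, Complex.norm_conj]; rfl
            have h3 : ‖((starRingEnd ℂ) b * u 0 + (starRingEnd ℂ) c * u 1) * (v 1 * w 1)‖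
                ≤ (β * p + γ * p') * (q' * r') := by
              rw [norm_mul, norm_mul]
              exact mul_le_mul_of_nonneg_right h2 (by positivity)
            linarith
    have ht2 : β * p + γ * p' ≤ α := aux_t α β γ p p' hα0 hβ hγ hp hp' hnorm hu hα2
    have hp1 : p ≤ 1 := by nlinarith [sq_nonneg p']
    have hbound : α * p * q * r + (β * p + γ * p') * (q' * r') ≤ α :=
      aux_bound α (β * p + γ * p') p q q' r r' hα0 (by positivity) ht2 hp hp1 hq hq' hr hr'
        (aux_qr q q' r r' hv hw)
    have hS : ‖(starRingEnd ℂ) a * u 0 * v 0 * w 0 +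
              (starRingEnd ℂ) b * u 0 * v 1 * w 1 +
              (starRingEnd ℂ) c * u 1 * v 1 * w 1‖ ≤ α := le_trans htri hbound
    exact pow_le_pow_left₀ (norm_nonneg _) hS 2
end

section
/- Let F(x) = x² − x(|a|² + (1−2|a|²)t) + |a|²|c|²(1−t)t where |a|²+|b|²+|c|²=1, 0 < t ≤ 1, and |a|² > 1/2. Then both roots of F are strictly less than |a|². -/
/-- With `F(x) = x² − x(|a|² + (1−2|a|²)t) + |a|²|c|²(1−t)t`, where
`|a|²+|b|²+|c|²=1`, `0 < t ≤ 1` and `|a|² > 1/2`, every (real) root of `F`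
is strictly less than `|a|²`. -/
theorem quadratic_roots_lt (a b c : ℂ) (t : ℝ)
    (hnorm : ‖a‖ ^ 2 + ‖b‖ ^ 2 + ‖c‖ ^ 2 = 1)
    (ha : 1 / 2 < ‖a‖ ^ 2) (ht0 : 0 < t) (ht1 : t ≤ 1) :
    ∀ x : ℝ,
      x ^ 2 - x * (‖a‖ ^ 2 + (1 - 2 * ‖a‖ ^ 2) * t)
        + ‖a‖ ^ 2 * ‖c‖ ^ 2 * (1 - t) * t = 0 →
      x < ‖a‖ ^ 2 := by
  intro x hx
  by_contra h
  push_neg at h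
  have hC : (0:ℝ) ≤ ‖c‖ ^ 2 := sq_nonneg _
  have hB : (0:ℝ) ≤ ‖b‖ ^ 2 := sq_nonneg _
  nlinarith [mul_nonneg (sub_nonneg.2 h) (mul_nonneg (le_of_lt ht0) (by nlinarith : (0:ℝ) ≤ 2 * ‖a‖ ^ 2 - 1)),
    mul_nonneg (mul_nonneg hC (sub_nonneg.2 ht1)) (le_of_lt ht0),
    mul_nonneg (sub_nonneg.2 h) (sub_nonneg.2 h),
    mul_pos ht0 (by nlinarith : (0:ℝ) < 2 * ‖a‖ ^ 2 - 1)]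
end

section
/- Let Ψ be a unit vector in H₁⊗H₂ (H_r finite-dimensional complex Hilbert spaces) and suppose (ψ₁,ψ₂) maximizes |⟨Ψ|φ₁⊗φ₂⟩|² over unit vectors. Then for any unit vector χ in H₂ orthogonal to ψ₂, ⟨Ψ|ψ₁⊗χ⟩ = 0. -/
/-!
Fixing the first factor at `ψ₁`, the overlap `⟨Ψ|ψ₁ ⊗ φ⟩` is the inner product `⟪v, φ⟫` with the
partial contraction `v = (⟨ψ₁| ⊗ 1)|Ψ⟩`. Its modulus on the unit sphere is at most `‖v‖`, with
the value `‖v‖` attained at `v / ‖v‖`, so a maximizer `ψ₂` is an equality case of Cauchy–Schwarz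
and hence parallel to `v`. Every `χ` orthogonal to `ψ₂` is then orthogonal to `v`.
-/

open Metric

section InnerProductSpace

variable {𝕜 E : Type*} [RCLike 𝕜] [NormedAddCommGroup E] [InnerProductSpace 𝕜 E]

theorem norm_le_norm_inner_of_isMaxOn {v u : E}
    (hmax : IsMaxOn (fun φ => ‖inner 𝕜 v φ‖) (sphere 0 1) u) :
    ‖v‖ ≤ ‖inner 𝕜 v u‖ := by
  rcases eq_or_ne v 0 with rfl | hv
  · simp
  have hv' : ‖v‖ ≠ 0 := norm_ne_zero_iff.mpr hv
  have hsphere : ((‖v‖⁻¹ : ℝ) : 𝕜) • v ∈ sphere (0 : E) 1 := by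
    simp [norm_smul, hv']
  calc ‖v‖ = ‖inner 𝕜 v (((‖v‖⁻¹ : ℝ) : 𝕜) • v)‖ := by
        rw [inner_smul_right, inner_self_eq_norm_sq_to_K, norm_mul, norm_pow]
        simp [hv', sq]
    _ ≤ ‖inner 𝕜 v u‖ := hmax hsphere

theorem inner_eq_zero_of_isMaxOn_norm_inner {v u χ : E} (hu : ‖u‖ = 1)
    (hmax : IsMaxOn (fun φ => ‖inner 𝕜 v φ‖) (sphere 0 1) u) (horth : inner 𝕜 u χ = 0) :
    inner 𝕜 v χ = 0 := by
  rcases eq_or_ne v 0 with rfl | hv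
  · simp
  have hcs : ‖inner 𝕜 v u‖ = ‖v‖ * ‖u‖ :=
    le_antisymm (norm_inner_le_norm v u) (by simpa [hu] using norm_le_norm_inner_of_isMaxOn hmax)
  obtain ⟨r, hr, rfl⟩ :=
    (norm_inner_eq_norm_iff hv (norm_ne_zero_iff.mp (by simp [hu]))).mp hcs
  rw [inner_smul_left, mul_eq_zero] at horth
  exact horth.resolve_left (by simpa using hr)

end InnerProductSpace

section Contraction

variable {𝕜 ι κ : Type*} [RCLike 𝕜] [Fintype ι] [Fintype κ]

/-- The vector `(⟨ψ₁| ⊗ 1)|Ψ⟩` for `Ψ` with coefficients `c i j`. -/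
noncomputable def partialContract (c : ι → κ → 𝕜) (ψ₁ : ι → 𝕜) : EuclideanSpace 𝕜 κ :=
  WithLp.toLp 2 fun j => ∑ i, starRingEnd 𝕜 (ψ₁ i) * c i j

theorem inner_euclidean_toLp (x y : κ → 𝕜) :
    inner 𝕜 (WithLp.toLp 2 x : EuclideanSpace 𝕜 κ) (WithLp.toLp 2 y) =
      ∑ j, starRingEnd 𝕜 (x j) * y j := by
  simp [PiLp.inner_apply, mul_comm]

theorem inner_partialContract (c : ι → κ → 𝕜) (ψ₁ : ι → 𝕜) (φ : κ → 𝕜) :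
    inner 𝕜 (partialContract c ψ₁) (WithLp.toLp 2 φ) =
      ∑ i, ∑ j, starRingEnd 𝕜 (c i j) * ψ₁ i * φ j := by
  simp only [partialContract, inner_euclidean_toLp, map_sum, map_mul, RCLike.conj_conj,
    Finset.sum_mul]
  rw [Finset.sum_comm]
  simp only [mul_comm (ψ₁ _)]

theorem norm_euclidean_toLp_eq_one_iff (φ : κ → 𝕜) :
    ‖(WithLp.toLp 2 φ : EuclideanSpace 𝕜 κ)‖ = 1 ↔ ∑ j, ‖φ j‖ ^ 2 = 1 := by
  rw [← EuclideanSpace.norm_sq_eq, pow_eq_one_iff_of_nonneg (norm_nonneg _) two_ne_zero]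

end Contraction

theorem bipartite_maximizer_orthogonality_general (d₁ d₂ : ℕ)
    (c : Fin d₁ → Fin d₂ → ℂ)
    (ψ₁ : Fin d₁ → ℂ) (ψ₂ : Fin d₂ → ℂ)
    (h₁ : ∑ i, ‖ψ₁ i‖ ^ 2 = 1)
    (h₂ : ∑ j, ‖ψ₂ j‖ ^ 2 = 1)
    (hmax : ∀ φ₁ : Fin d₁ → ℂ, ∀ φ₂ : Fin d₂ → ℂ,
      (∑ i, ‖φ₁ i‖ ^ 2 = 1) → (∑ j, ‖φ₂ j‖ ^ 2 = 1) →
      ‖∑ i, ∑ j, (starRingEnd ℂ) (c i j) * φ₁ i * φ₂ j‖ ^ 2 ≤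
        ‖∑ i, ∑ j, (starRingEnd ℂ) (c i j) * ψ₁ i * ψ₂ j‖ ^ 2)
    (χ : Fin d₂ → ℂ)
    (horth : ∑ j, (starRingEnd ℂ) (ψ₂ j) * χ j = 0) :
    ∑ i, ∑ j, (starRingEnd ℂ) (c i j) * ψ₁ i * χ j = 0 := by
  have hmax₂ : IsMaxOn (fun φ => ‖inner ℂ (partialContract c ψ₁) φ‖) (sphere 0 1)
      (WithLp.toLp 2 ψ₂) := by
    intro φ hφ
    rw [mem_sphere_zero_iff_norm] at hφ
    have := hmax ψ₁ φ.ofLp h₁ ((norm_euclidean_toLp_eq_one_iff _).mp hφ)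
    rw [pow_le_pow_iff_left₀ (norm_nonneg _) (norm_nonneg _) two_ne_zero,
      ← inner_partialContract, ← inner_partialContract] at this
    simpa using this
  rw [← inner_partialContract]
  exact inner_eq_zero_of_isMaxOn_norm_inner ((norm_euclidean_toLp_eq_one_iff ψ₂).mpr h₂) hmax₂
    (by rwa [inner_euclidean_toLp])

/-- If `(ψ₁,ψ₂)` maximizes `|⟨Ψ|φ₁⊗φ₂⟩|²` over unit vectors for a unit
vector `Ψ ∈ H₁⊗H₂` (coefficients `c`), then for any unit vector `χ ∈ H₂`
orthogonal to `ψ₂` we have `⟨Ψ|ψ₁⊗χ⟩ = 0`. -/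
theorem bipartite_maximizer_orthogonality (d₁ d₂ : ℕ)
    (c : Fin d₁ → Fin d₂ → ℂ)
    (hΨ : ∑ i, ∑ j, ‖c i j‖ ^ 2 = 1)
    (ψ₁ : Fin d₁ → ℂ) (ψ₂ : Fin d₂ → ℂ)
    (h₁ : ∑ i, ‖ψ₁ i‖ ^ 2 = 1)
    (h₂ : ∑ j, ‖ψ₂ j‖ ^ 2 = 1)
    (hmax : ∀ φ₁ : Fin d₁ → ℂ, ∀ φ₂ : Fin d₂ → ℂ,
      (∑ i, ‖φ₁ i‖ ^ 2 = 1) → (∑ j, ‖φ₂ j‖ ^ 2 = 1) →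
      ‖∑ i, ∑ j, (starRingEnd ℂ) (c i j) * φ₁ i * φ₂ j‖ ^ 2 ≤
        ‖∑ i, ∑ j, (starRingEnd ℂ) (c i j) * ψ₁ i * ψ₂ j‖ ^ 2)
    (χ : Fin d₂ → ℂ) (hχ : ∑ j, ‖χ j‖ ^ 2 = 1)
    (horth : ∑ j, (starRingEnd ℂ) (ψ₂ j) * χ j = 0) :
    ∑ i, ∑ j, (starRingEnd ℂ) (c i j) * ψ₁ i * χ j = 0 :=
  bipartite_maximizer_orthogonality_general d₁ d₂ c ψ₁ ψ₂ h₁ h₂ hmax χ horth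
end

section
/- Every state vector Ψ in (ℂ²)⊗(ℂ²)⊗(ℂ²) is locally unitarily equivalent to a state of the form a|000⟩ + b|011⟩ + c|101⟩ + d|110⟩ + e|111⟩ with b, c, d, e real and non-negative. -/
open ComplexConjugate

namespace ThreeQubitAux

/-- unit vector in ℂ², stated as an equation in ℂ. -/
def unit2 (x : Fin 2 → ℂ) : Prop :=
  x 0 * conj (x 0) + x 1 * conj (x 1) = 1

/-- orthogonal complement vector -/
def perp (x : Fin 2 → ℂ) : Fin 2 → ℂ := ![-(conj (x 1)), conj (x 0)]

/-- trilinear pairing -/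
noncomputable def g (Ψ : Fin 2 → Fin 2 → Fin 2 → ℂ) (u v w : Fin 2 → ℂ) : ℂ :=
  ∑ i, ∑ j, ∑ k, u i * v j * w k * Ψ i j k

lemma perp_zero (x : Fin 2 → ℂ) : perp x 0 = -(conj (x 1)) := rfl
lemma perp_one (x : Fin 2 → ℂ) : perp x 1 = conj (x 0) := rfl

lemma unit2_perp {x : Fin 2 → ℂ} (hx : unit2 x) : unit2 (perp x) := by
  unfold unit2 at *
  simp only [perp_zero, perp_one, map_neg, Complex.conj_conj]
  linear_combination hx

lemma unit2_comb {x : Fin 2 → ℂ} {α β : ℂ} (hx : unit2 x)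
    (hαβ : α * conj α + β * conj β = 1) :
    unit2 (fun k => α * x k + β * perp x k) := by
  unfold unit2 at *
  simp only [perp_zero, perp_one, map_add, map_mul, map_neg, Complex.conj_conj]
  linear_combination (x 0 * conj (x 0) + x 1 * conj (x 1)) * hαβ + hx

lemma key {a t : ℂ}
    (h : ∀ α β : ℂ, α * conj α + β * conj β = 1 →
      ‖α * a + β * t‖ ≤ ‖a‖) :
    t = 0 := by
  by_contra ht
  have hns : 0 < Complex.normSq a + Complex.normSq t := by
    have := Complex.normSq_pos.mpr ht
    have := Complex.normSq_nonneg a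
    linarith
  set s : ℝ := Real.sqrt (Complex.normSq a + Complex.normSq t) with hsdef
  have hspos : 0 < s := Real.sqrt_pos.mpr hns
  have hs2 : s ^ 2 = Complex.normSq a + Complex.normSq t := Real.sq_sqrt hns.le
  have hsne : (s : ℂ) ≠ 0 := by exact_mod_cast hspos.ne'
  have hcast : (s : ℂ) * (s : ℂ) = (Complex.normSq a : ℂ) + (Complex.normSq t : ℂ) := by
    rw [← Complex.ofReal_mul, ← Complex.ofReal_add, ← hs2]
    norm_cast
    ring
  have ha' : a * conj a = (Complex.normSq a : ℂ) := Complex.mul_conj a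
  have ht' : t * conj t = (Complex.normSq t : ℂ) := Complex.mul_conj t
  have h1 : (conj a / s) * conj (conj a / s) + (conj t / s) * conj (conj t / s) = 1 := by
    simp only [map_div₀, Complex.conj_conj, Complex.conj_ofReal]
    field_simp
    linear_combination ha' + ht' - hcast
  have h2 : (conj a / s) * a + (conj t / s) * t = (s : ℂ) := by
    field_simp
    linear_combination ha' + ht' - hcast
  have hle := h _ _ h1
  rw [h2, Complex.norm_real, Real.norm_eq_abs, abs_of_pos hspos] at hle
  have habs : ‖a‖ ^ 2 = Complex.normSq a := Complex.sq_norm a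
  have htpos : 0 < Complex.normSq t := Complex.normSq_pos.mpr ht
  nlinarith [norm_nonneg a]

/-- phase factor -/
lemma phase (z : ℂ) : ∃ (p : ℂ) (r : ℝ), 0 ≤ r ∧ p * conj p = 1 ∧ z * p = (r : ℂ) := by
  by_cases h : z = 0
  · exact ⟨1, 0, le_refl 0, by simp, by simp [h]⟩
  · have habs : ((‖z‖ : ℝ) : ℂ) ≠ 0 := by
      exact_mod_cast (norm_ne_zero_iff.mpr h)
    refine ⟨conj z / ((‖z‖ : ℝ) : ℂ), ‖z‖, norm_nonneg z, ?_, ?_⟩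
    · simp only [map_div₀, Complex.conj_conj, Complex.conj_ofReal]
      field_simp
      rw [mul_comm]
      rw [Complex.mul_conj, Complex.normSq_eq_norm_sq]
      push_cast
      ring
    · rw [mul_div_assoc', Complex.mul_conj, Complex.normSq_eq_norm_sq]
      push_cast
      field_simp

/-- unitary matrix with first row `p • x`, second row `q • perp x` -/
def Mφ (x : Fin 2 → ℂ) (p q : ℂ) : Matrix (Fin 2) (Fin 2) ℂ :=
  ![![p * x 0, p * x 1], ![-(q * conj (x 1)), q * conj (x 0)]]

lemma Mφ_unitary {x : Fin 2 → ℂ} {p q : ℂ} (hx : unit2 x)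
    (hp : p * conj p = 1) (hq : q * conj q = 1) :
    Mφ x p q ∈ Matrix.unitaryGroup (Fin 2) ℂ := by
  rw [Matrix.mem_unitaryGroup_iff]
  ext i j
  simp only [Matrix.mul_apply, Matrix.star_apply]
  have hx' : x 0 * conj (x 0) + x 1 * conj (x 1) = 1 := hx
  fin_cases i <;> fin_cases j <;>
    simp [Mφ, Matrix.mul_apply, Matrix.star_apply, Fin.sum_univ_two, Matrix.one_apply, Fin.mk_zero, Fin.mk_one]
  · linear_combination (p * conj p) * hx' + hp
  · ring
  · ring
  · linear_combination (q * conj q) * hx' + hq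

lemma unit2_normSq {x : Fin 2 → ℂ} (hx : unit2 x) :
    Complex.normSq (x 0) + Complex.normSq (x 1) = 1 := by
  have hx' : x 0 * conj (x 0) + x 1 * conj (x 1) = 1 := hx
  rw [Complex.mul_conj, Complex.mul_conj] at hx'
  exact_mod_cast hx'

lemma isCompact_unitSet : IsCompact {x : Fin 2 → ℂ | unit2 x} := by
  apply Metric.isCompact_of_isClosed_isBounded
  · have hc : Continuous fun x : Fin 2 → ℂ =>
        x 0 * conj (x 0) + x 1 * conj (x 1) :=
      ((continuous_apply (0 : Fin 2)).mul
        (Complex.continuous_conj.comp (continuous_apply 0))).add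
      ((continuous_apply (1 : Fin 2)).mul
        (Complex.continuous_conj.comp (continuous_apply 1)))
    exact isClosed_eq hc continuous_const
  · apply (Metric.isBounded_closedBall (x := (0 : Fin 2 → ℂ)) (r := 1)).subset
    intro x hx
    simp only [Metric.mem_closedBall, dist_zero_right]
    have h := unit2_normSq hx
    rw [pi_norm_le_iff_of_nonneg zero_le_one]
    intro i
    have h0 := Complex.normSq_nonneg (x 0)
    have h1 := Complex.normSq_nonneg (x 1)
    have h2 : Complex.normSq (x i) ≤ 1 := by
      fin_cases i <;> simp only [Fin.mk_zero, Fin.mk_one, Fin.isValue] <;> linarith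
    have h3 := Complex.sq_norm (x i)
    nlinarith [norm_nonneg (x i)]

lemma unit2_e0 : unit2 ![1, 0] := by
  unfold unit2
  simp

set_option maxHeartbeats 1000000 in
lemma continuous_g (Ψ : Fin 2 → Fin 2 → Fin 2 → ℂ) :
    Continuous fun p : (Fin 2 → ℂ) × (Fin 2 → ℂ) × (Fin 2 → ℂ) =>
      g Ψ p.1 p.2.1 p.2.2 := by
  simp only [g, Fin.sum_univ_two]
  fun_prop

set_option maxHeartbeats 1000000 in
lemma exists_max (Ψ : Fin 2 → Fin 2 → Fin 2 → ℂ) :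
    ∃ u v w, unit2 u ∧ unit2 v ∧ unit2 w ∧
      ∀ u' v' w', unit2 u' → unit2 v' → unit2 w' →
        ‖g Ψ u' v' w'‖ ≤ ‖g Ψ u v w‖ := by
  have hK : IsCompact ({x | unit2 x} ×ˢ ({x | unit2 x} ×ˢ {x | unit2 x}) :
      Set ((Fin 2 → ℂ) × (Fin 2 → ℂ) × (Fin 2 → ℂ))) :=
    isCompact_unitSet.prod (isCompact_unitSet.prod isCompact_unitSet)
  have hne : ({x | unit2 x} ×ˢ ({x | unit2 x} ×ˢ {x | unit2 x}) :
      Set ((Fin 2 → ℂ) × (Fin 2 → ℂ) × (Fin 2 → ℂ))).Nonempty :=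
    ⟨⟨![1,0], ![1,0], ![1,0]⟩, ⟨unit2_e0, unit2_e0, unit2_e0⟩⟩
  have hcont : Continuous fun p : (Fin 2 → ℂ) × (Fin 2 → ℂ) × (Fin 2 → ℂ) =>
      ‖g Ψ p.1 p.2.1 p.2.2‖ :=
    continuous_norm.comp (continuous_g Ψ)
  obtain ⟨⟨u, v, w⟩, hmem, hmax⟩ := hK.exists_isMaxOn hne hcont.continuousOn
  rw [Set.mem_prod] at hmem
  rw [Set.mem_prod] at hmem
  obtain ⟨hu, hv, hw⟩ := hmem
  rw [isMaxOn_iff] at hmax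
  refine ⟨u, v, w, hu, hv, hw, fun u' v' w' hu' hv' hw' => ?_⟩
  exact hmax (u', v', w') (Set.mem_prod.mpr ⟨hu', Set.mem_prod.mpr ⟨hv', hw'⟩⟩)

lemma g_lin₁ (Ψ : Fin 2 → Fin 2 → Fin 2 → ℂ) (u v w : Fin 2 → ℂ) (α β : ℂ) :
    g Ψ (fun i => α * u i + β * perp u i) v w
      = α * g Ψ u v w + β * g Ψ (perp u) v w := by
  simp only [g, perp_zero, perp_one, Fin.sum_univ_two]
  ring

lemma g_lin₂ (Ψ : Fin 2 → Fin 2 → Fin 2 → ℂ) (u v w : Fin 2 → ℂ) (α β : ℂ) :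
    g Ψ u (fun j => α * v j + β * perp v j) w
      = α * g Ψ u v w + β * g Ψ u (perp v) w := by
  simp only [g, perp_zero, perp_one, Fin.sum_univ_two]
  ring

lemma g_lin₃ (Ψ : Fin 2 → Fin 2 → Fin 2 → ℂ) (u v w : Fin 2 → ℂ) (α β : ℂ) :
    g Ψ u v (fun k => α * w k + β * perp w k)
      = α * g Ψ u v w + β * g Ψ u v (perp w) := by
  simp only [g, perp_zero, perp_one, Fin.sum_univ_two]
  ring



lemma max_perp₁ {Ψ : Fin 2 → Fin 2 → Fin 2 → ℂ} {u v w : Fin 2 → ℂ}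
    (hu : unit2 u) (hv : unit2 v) (hw : unit2 w)
    (hmax : ∀ u' v' w', unit2 u' → unit2 v' → unit2 w' →
      ‖g Ψ u' v' w'‖ ≤ ‖g Ψ u v w‖) :
    g Ψ (perp u) v w = 0 := by
  apply key (a := g Ψ u v w)
  intro α β hαβ
  rw [← g_lin₁]
  exact hmax _ v w (unit2_comb hu hαβ) hv hw

lemma max_perp₂ {Ψ : Fin 2 → Fin 2 → Fin 2 → ℂ} {u v w : Fin 2 → ℂ}
    (hu : unit2 u) (hv : unit2 v) (hw : unit2 w)
    (hmax : ∀ u' v' w', unit2 u' → unit2 v' → unit2 w' →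
      ‖g Ψ u' v' w'‖ ≤ ‖g Ψ u v w‖) :
    g Ψ u (perp v) w = 0 := by
  apply key (a := g Ψ u v w)
  intro α β hαβ
  rw [← g_lin₂]
  exact hmax u _ w hu (unit2_comb hv hαβ) hw

lemma max_perp₃ {Ψ : Fin 2 → Fin 2 → Fin 2 → ℂ} {u v w : Fin 2 → ℂ}
    (hu : unit2 u) (hv : unit2 v) (hw : unit2 w)
    (hmax : ∀ u' v' w', unit2 u' → unit2 v' → unit2 w' →
      ‖g Ψ u' v' w'‖ ≤ ‖g Ψ u v w‖) :
    g Ψ u v (perp w) = 0 := by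
  apply key (a := g Ψ u v w)
  intro α β hαβ
  rw [← g_lin₃]
  exact hmax u v _ hu hv (unit2_comb hw hαβ)

end ThreeQubitAux

open ThreeQubitAux

/-- Every three-qubit state is locally unitarily equivalent to
`a|000⟩ + b|011⟩ + c|101⟩ + d|110⟩ + e|111⟩` with `b, c, d, e` real and
non-negative. -/
theorem three_qubit_canonical_form (Ψ : Fin 2 → Fin 2 → Fin 2 → ℂ) :
    ∃ U₁ U₂ U₃ : Matrix (Fin 2) (Fin 2) ℂ,
      U₁ ∈ Matrix.unitaryGroup (Fin 2) ℂ ∧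
      U₂ ∈ Matrix.unitaryGroup (Fin 2) ℂ ∧
      U₃ ∈ Matrix.unitaryGroup (Fin 2) ℂ ∧
      ∃ (a : ℂ) (b c d e : ℝ), 0 ≤ b ∧ 0 ≤ c ∧ 0 ≤ d ∧ 0 ≤ e ∧
        ∀ i j k : Fin 2,
          (∑ i' : Fin 2, ∑ j' : Fin 2, ∑ k' : Fin 2,
              U₁ i i' * U₂ j j' * U₃ k k' * Ψ i' j' k')
            = (![![![a, 0], ![0, (b : ℂ)]],
                 ![![0, (c : ℂ)], ![(d : ℂ), (e : ℂ)]]] : Fin 2 → Fin 2 → Fin 2 → ℂ) i j k := by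
  obtain ⟨u, v, w, hu, hv, hw, hmax⟩ := exists_max Ψ
  have h100 : g Ψ (perp u) v w = 0 := max_perp₁ hu hv hw hmax
  have h010 : g Ψ u (perp v) w = 0 := max_perp₂ hu hv hw hmax
  have h001 : g Ψ u v (perp w) = 0 := max_perp₃ hu hv hw hmax
  obtain ⟨pb, b, hb0, hpb, hzb⟩ := phase (g Ψ u (perp v) (perp w))
  obtain ⟨pc, c, hc0, hpc, hzc⟩ := phase (g Ψ (perp u) v (perp w))
  obtain ⟨pd, d, hd0, hpd, hzd⟩ := phase (g Ψ (perp u) (perp v) w)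
  obtain ⟨pe, e, he0, hpe, hze⟩ := phase (g Ψ (perp u) (perp v) (perp w))
  have hφ1 : (pb * conj pe) * conj (pb * conj pe) = 1 := by
    simp only [map_mul, Complex.conj_conj]
    linear_combination (conj pe * pe) * hpb + hpe
  have hφ3 : (pd * conj pe) * conj (pd * conj pe) = 1 := by
    simp only [map_mul, Complex.conj_conj]
    linear_combination (conj pe * pe) * hpd + hpe
  have hone : (1 : ℂ) * conj (1 : ℂ) = 1 := by simp
  refine ⟨Mφ u (pb * conj pe) 1, Mφ v pc pe, Mφ w (pd * conj pe) 1,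
    Mφ_unitary hu hφ1 hone, Mφ_unitary hv hpc hpe, Mφ_unitary hw hφ3 hone,
    (pb * conj pe) * pc * (pd * conj pe) * g Ψ u v w, b, c, d, e,
    hb0, hc0, hd0, he0, ?_⟩
  simp only [g, perp_zero, perp_one, Fin.sum_univ_two] at h100 h010 h001 hzb hzc hzd hze
  intro i j k
  fin_cases i <;> fin_cases j <;> fin_cases k <;>
    simp only [g, perp_zero, perp_one, Mφ, Fin.sum_univ_two, Fin.mk_zero, Fin.mk_one,
      Fin.isValue, Matrix.cons_val', Matrix.cons_val_zero, Matrix.cons_val_one,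
      Matrix.head_cons, Matrix.empty_val', Matrix.cons_val_fin_one, Matrix.head_fin_const]
  · ring
  · linear_combination (pb * conj pe * pc) * h001
  · linear_combination (pb * conj pe * pe * (pd * conj pe)) * h010
  · linear_combination (conj pe * pe) * hzb + (b : ℂ) * hpe
  · linear_combination (pc * (pd * conj pe)) * h100
  · linear_combination hzc
  · linear_combination (conj pe * pe) * hzd + (d : ℂ) * hpe
  · linear_combination hze
end

section
/- Let Ψ ∈ (ℂ^d)^{⊗n} with n ≥ 3, d ≥ 2. Then there exist orthonormal bases {ψᵢ^{(r)}} of each factor such that in the expansion Ψ = Σ c_{i₁⋯iₙ} ψ_{i₁}^{(1)}⊗⋯⊗ψ_{iₙ}^{(n)}, the coefficient c_{i₁⋯iₙ} vanishes whenever all indices but one equal some i, the differing index j satisfies i < j. -/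
open scoped ComplexConjugate InnerProductSpace
noncomputable section SchmidtAux
variable {n d : ℕ}

/-- Shorthand for the local Hilbert space. -/
abbrev SchE (d : ℕ) := EuclideanSpace ℂ (Fin d)

/-- Overlap of `Ψ` with a product vector `u 0 ⊗ ⋯ ⊗ u (n-1)` (conjugated coefficients). -/
def Gfun (Ψ : (Fin n → Fin d) → ℂ) (u : Fin n → SchE d) : ℂ :=
  ∑ J : Fin n → Fin d, (∏ s, (starRingEnd ℂ) (u s (J s))) * Ψ J

/-- Constraint set at stage `i`: tuples of unit vectors orthogonal to all previous columns. -/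
def SchS (prev : ℕ → Fin n → SchE d) (i : ℕ) : Set (Fin n → SchE d) :=
  {u | (∀ s, ‖u s‖ = 1) ∧ ∀ s, ∀ t, t < i → ⟪prev t s, u s⟫_ℂ = 0}

theorem Gfun_cont (Ψ : (Fin n → Fin d) → ℂ) : Continuous (Gfun Ψ) := by
  unfold Gfun
  exact continuous_finset_sum _ fun J _ =>
    (continuous_finset_prod _ fun s _ =>
      Complex.continuous_conj.comp ((continuous_apply (J s)).comp
        ((PiLp.continuous_ofLp (p := 2) (β := fun _ : Fin d => ℂ)).comp (continuous_apply s)))).mul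
      continuous_const

theorem SchS_closed (prev : ℕ → Fin n → SchE d) (i : ℕ) : IsClosed (SchS prev i) := by
  have h1 : IsClosed {u : Fin n → SchE d | ∀ s, ‖u s‖ = 1} := by
    rw [Set.setOf_forall]
    exact isClosed_iInter fun s =>
      isClosed_eq (continuous_norm.comp (continuous_apply s)) continuous_const
  have h2 : IsClosed {u : Fin n → SchE d | ∀ s, ∀ t, t < i → ⟪prev t s, u s⟫_ℂ = 0} := by
    rw [Set.setOf_forall]
    refine isClosed_iInter fun s => ?_
    rw [Set.setOf_forall]
    refine isClosed_iInter fun t => ?_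
    rw [Set.setOf_forall]
    exact isClosed_iInter fun ht =>
      isClosed_eq (Continuous.inner continuous_const (continuous_apply s)) continuous_const
  exact h1.inter h2

theorem SchS_compact (prev : ℕ → Fin n → SchE d) (i : ℕ) : IsCompact (SchS prev i) := by
  refine Metric.isCompact_of_isClosed_isBounded (SchS_closed prev i) ?_
  refine (Metric.isBounded_closedBall (x := (0 : Fin n → SchE d)) (r := 1)).subset ?_
  intro u hu
  simp only [Metric.mem_closedBall, dist_zero_right]
  exact pi_norm_le_iff_of_nonneg zero_le_one |>.2 fun s => le_of_eq (hu.1 s)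

theorem SchS_congr {prev prev' : ℕ → Fin n → SchE d} (i : ℕ)
    (h : ∀ t, t < i → prev t = prev' t) : SchS prev i = SchS prev' i := by
  unfold SchS
  ext u
  constructor <;> rintro ⟨h1, h2⟩ <;> refine ⟨h1, fun s t ht => ?_⟩
  · rw [← h t ht]; exact h2 s t ht
  · rw [h t ht]; exact h2 s t ht

theorem SchS_nonempty (prev : ℕ → Fin n → SchE d) {i : ℕ} (hi : i < d) :
    (SchS prev i).Nonempty := by
  have hs : ∀ s : Fin n, ∃ x : SchE d, ‖x‖ = 1 ∧ ∀ t, t < i → ⟪prev t s, x⟫_ℂ = 0 := by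
    intro s
    set K : Submodule ℂ (SchE d) := Submodule.span ℂ (Set.range fun t : Fin i => prev t s)
      with hK
    have hrank : Module.finrank ℂ K ≤ i := by
      classical
      refine le_trans (finrank_span_le_card _) ?_
      rw [Set.toFinset_range]
      exact le_trans Finset.card_image_le (by simp)
    have hne : Kᗮ ≠ ⊥ := by
      intro hbot
      have : Module.finrank ℂ K + Module.finrank ℂ Kᗮ = d := by
        simpa using Submodule.finrank_add_finrank_orthogonal (K := K)
      rw [hbot, finrank_bot] at this
      omega
    obtain ⟨x, hxK, hx0⟩ := Submodule.exists_mem_ne_zero_of_ne_bot hne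
    refine ⟨‖x‖⁻¹ • x, norm_smul_inv_norm hx0, fun t ht => ?_⟩
    have hmem : (‖x‖⁻¹ : ℂ) • x ∈ Kᗮ := Kᗮ.smul_mem _ hxK
    simpa [hx0, inner_smul_right, inner_smul_real_right] using (Submodule.mem_orthogonal K _).1 hmem _ (Submodule.subset_span ⟨⟨t, ht⟩, rfl⟩)
  choose x hx1 hx2 using hs
  exact ⟨x, hx1, fun s t ht => hx2 s t ht⟩

open Classical in
/-- The columns of the generalized-Schmidt bases, chosen recursively by maximizing
the overlap with `Ψ` among unit tuples orthogonal to the previously chosen columns. -/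
def cols (Ψ : (Fin n → Fin d) → ℂ) : ℕ → Fin n → SchE d
  | i =>
    let prev : ℕ → Fin n → SchE d := fun t => if _h : t < i then cols Ψ t else 0
    if h : ∃ u ∈ SchS prev i,
        IsMaxOn (fun v => ‖Gfun Ψ v‖) (SchS prev i) u
    then h.choose else fun _ => 0
termination_by i => i
decreasing_by exact _h

theorem cols_spec (Ψ : (Fin n → Fin d) → ℂ) {i : ℕ} (hi : i < d) :
    cols Ψ i ∈ SchS (cols Ψ) i ∧
      IsMaxOn (fun v => ‖Gfun Ψ v‖) (SchS (cols Ψ) i) (cols Ψ i) := by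
  rw [cols]
  set prev : ℕ → Fin n → SchE d := fun t => if _h : t < i then cols Ψ t else 0 with hprev
  have hset : SchS prev i = SchS (cols Ψ) i :=
    SchS_congr i fun t ht => by simp [hprev, ht]
  have hex : ∃ u ∈ SchS prev i,
      IsMaxOn (fun v => ‖Gfun Ψ v‖) (SchS prev i) u := by
    refine (SchS_compact prev i).exists_isMaxOn (SchS_nonempty prev hi) ?_
    exact ((continuous_norm.comp (Gfun_cont Ψ))).continuousOn
  rw [dif_pos hex]
  obtain ⟨h1, h2⟩ := hex.choose_spec
  exact ⟨hset ▸ h1, hset ▸ h2⟩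

theorem Gfun_update (Ψ : (Fin n → Fin d) → ℂ) (u : Fin n → SchE d) (r : Fin n)
    (x y : SchE d) (α β : ℂ) :
    Gfun Ψ (Function.update u r (α • x + β • y)) =
      (starRingEnd ℂ) α * Gfun Ψ (Function.update u r x) +
        (starRingEnd ℂ) β * Gfun Ψ (Function.update u r y) := by
  classical
  unfold Gfun
  rw [Finset.mul_sum, Finset.mul_sum, ← Finset.sum_add_distrib]
  refine Finset.sum_congr rfl fun J _ => ?_
  have hsplit : ∀ z : SchE d, (∏ s, (starRingEnd ℂ) (Function.update u r z s (J s))) =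
      (starRingEnd ℂ) (z (J r)) *
        ∏ s ∈ Finset.univ.erase r, (starRingEnd ℂ) (u s (J s)) := by
    intro z
    rw [← Finset.mul_prod_erase Finset.univ _ (Finset.mem_univ r), Function.update_self]
    congr 1
    exact Finset.prod_congr rfl fun s hs => by
      rw [Function.update_of_ne (Finset.ne_of_mem_erase hs)]
  rw [hsplit, hsplit, hsplit]
  have hz : ((α • x + β • y : SchE d) (J r)) = α * x (J r) + β * y (J r) := rfl
  rw [hz, map_add, map_mul, map_mul]
  ring

theorem phase_trick {a c : ℂ}
    (h : ∀ α β : ℂ, ‖α‖ ^ 2 + ‖β‖ ^ 2 = 1 →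
      ‖(starRingEnd ℂ) α * a + (starRingEnd ℂ) β * c‖ ≤ ‖a‖) :
    c = 0 := by
  set A := ‖a‖ with hA
  set C := ‖c‖ with hC
  set m := Real.sqrt (A ^ 2 + C ^ 2) with hm
  have hsum : (0:ℝ) ≤ A ^ 2 + C ^ 2 := by positivity
  have hm2 : m ^ 2 = A ^ 2 + C ^ 2 := Real.sq_sqrt hsum
  by_cases hm0 : m = 0
  · have : A ^ 2 + C ^ 2 = 0 := by rw [← hm2, hm0]; ring
    have hC0 : C = 0 := by nlinarith [norm_nonneg a, norm_nonneg c]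
    exact norm_eq_zero.1 hC0
  · have hmpos : 0 < m := lt_of_le_of_ne (Real.sqrt_nonneg _) (Ne.symm hm0)
    have habs : ‖(m : ℂ)⁻¹‖ = m⁻¹ := by
      rw [norm_inv, Complex.norm_real, Real.norm_eq_abs, abs_of_pos hmpos]
    have h1 : ‖(m:ℂ)⁻¹ * a‖ ^ 2 + ‖(m:ℂ)⁻¹ * c‖ ^ 2 = 1 := by
      rw [norm_mul, norm_mul, habs, ← hA, ← hC]
      field_simp
      try rw [← hm2]
      try ring
    have hval : (starRingEnd ℂ) ((m:ℂ)⁻¹ * a) * a + (starRingEnd ℂ) ((m:ℂ)⁻¹ * c) * c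
        = ((m : ℂ)) := by
      rw [map_mul, map_mul]
      have hma : (starRingEnd ℂ) ((m:ℂ)⁻¹) = (m:ℂ)⁻¹ := by
        rw [map_inv₀, Complex.conj_ofReal]
      rw [hma]
      have haa : (starRingEnd ℂ) a * a = ((A ^ 2 : ℝ) : ℂ) := by
        rw [← Complex.normSq_eq_conj_mul_self, hA, Complex.sq_norm]
        try simp [Complex.ofReal_pow]
      have hcc : (starRingEnd ℂ) c * c = ((C ^ 2 : ℝ) : ℂ) := by
        rw [← Complex.normSq_eq_conj_mul_self, hC, Complex.sq_norm]
        try simp [Complex.ofReal_pow]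
      have hmne : (m : ℂ) ≠ 0 := by exact_mod_cast hm0
      rw [mul_assoc, mul_assoc, haa, hcc, ← mul_add, ← Complex.ofReal_add]
      have h2' : ((A ^ 2 + C ^ 2 : ℝ) : ℂ) = (m : ℂ) ^ 2 := by
        rw [← hm2]; push_cast; ring
      rw [h2', sq]
      field_simp
    have := h ((m:ℂ)⁻¹ * a) ((m:ℂ)⁻¹ * c) h1
    rw [hval] at this
    rw [Complex.norm_real, Real.norm_eq_abs, abs_of_pos hmpos] at this
    have hm2le : m ^ 2 ≤ A ^ 2 := by
      have hA0 : 0 ≤ A := norm_nonneg a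
      nlinarith
    have hC0 : C = 0 := by nlinarith [norm_nonneg c]
    exact norm_eq_zero.1 hC0

theorem cols_inner_zero (Ψ : (Fin n → Fin d) → ℂ) {i j : ℕ} (hij : i < j) (hj : j < d)
    (r : Fin n) :
    Gfun Ψ (Function.update (fun s => cols Ψ i s) r (cols Ψ j r)) = 0 := by
  have hi : i < d := lt_trans hij hj
  obtain ⟨⟨hinorm, hiorth⟩, himax⟩ := cols_spec Ψ hi
  obtain ⟨⟨hjnorm, hjorth⟩, _⟩ := cols_spec Ψ hj
  set x := cols Ψ i r with hx
  set y := cols Ψ j r with hy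
  have hxy : ⟪x, y⟫_ℂ = 0 := hjorth r i hij
  refine phase_trick (a := Gfun Ψ (cols Ψ i)) ?_
  intro α β hab
  set w : SchE d := α • x + β • y with hw
  -- the modified tuple lies in the constraint set
  have hwnorm : ‖w‖ = 1 := by
    have hxnorm : ‖x‖ = 1 := hinorm r
    have hynorm : ‖y‖ = 1 := hjnorm r
    have hinner : ⟪(α • x : SchE d), (β • y : SchE d)⟫_ℂ = 0 := by
      rw [inner_smul_left, inner_smul_right, hxy]; ring
    have ha1 : ‖(α • x : SchE d)‖ = ‖α‖ := by
      rw [norm_smul, hxnorm, mul_one]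
    have hb1 : ‖(β • y : SchE d)‖ = ‖β‖ := by
      rw [norm_smul, hynorm, mul_one]
    have hsq : ‖w‖ ^ 2 = 1 := by
      rw [hw, norm_add_sq (𝕜 := ℂ), hinner, ha1, hb1]
      simpa using hab
    have : ‖w‖ = Real.sqrt (‖w‖ ^ 2) := (Real.sqrt_sq (norm_nonneg w)).symm
    rw [this, hsq, Real.sqrt_one]
  have hmem : Function.update (fun s => cols Ψ i s) r w ∈ SchS (cols Ψ) i := by
    constructor
    · intro s
      rcases eq_or_ne s r with h | h
      · rw [h, Function.update_self]; exact hwnorm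
      · rw [Function.update_of_ne h]; exact hinorm s
    · intro s t ht
      rcases eq_or_ne s r with h | h
      · rw [h, Function.update_self, hw, inner_add_right, inner_smul_right,
          inner_smul_right, hiorth r t ht, hjorth r t (lt_trans ht hij)]
        ring
      · rw [Function.update_of_ne h]; exact hiorth s t ht
  have hle := himax hmem
  have hGw : Gfun Ψ (Function.update (fun s => cols Ψ i s) r w) =
      (starRingEnd ℂ) α * Gfun Ψ (cols Ψ i) +
        (starRingEnd ℂ) β * Gfun Ψ (Function.update (fun s => cols Ψ i s) r y) := by
    rw [hw, Gfun_update]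
    congr 2
    have : Function.update (fun s => cols Ψ i s) r x = fun s => cols Ψ i s := by
      rw [hx]; exact Function.update_eq_self r _
    rw [this]
  have hle' : ‖Gfun Ψ (Function.update (fun s => cols Ψ i s) r w)‖ ≤
      ‖Gfun Ψ (cols Ψ i)‖ := hle
  rw [hGw] at hle'
  exact hle'

theorem cols_orthonormal (Ψ : (Fin n → Fin d) → ℂ) (r : Fin n) {t t' : ℕ}
    (ht : t < d) (ht' : t' < d) :
    ⟪cols Ψ t r, cols Ψ t' r⟫_ℂ = if t = t' then 1 else 0 := by
  rcases lt_trichotomy t t' with h | h | h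
  · rw [if_neg (Nat.ne_of_lt h)]
    exact (cols_spec Ψ ht').1.2 r t h
  · subst h
    rw [if_pos rfl, inner_self_eq_norm_sq_to_K, (cols_spec Ψ ht).1.1 r]
    norm_num
  · rw [if_neg (Nat.ne_of_gt h), ← inner_conj_symm, (cols_spec Ψ ht).1.2 r t' h, map_zero]

end SchmidtAux

/-- Generalized Schmidt decomposition (condition 1 of Theorem 1): for any
`Ψ ∈ (ℂ^d)^{⊗n}` with `n ≥ 3`, `d ≥ 2`, there exist orthonormal bases of each
factor (encoded by unitary matrices `U r`, whose columns are the basis vectors)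
such that the coefficient of `Ψ` with index `i` in every position except index
`j` in position `r` vanishes whenever `i < j`. -/
theorem generalized_schmidt_condition_one (n d : ℕ) (hn : 3 ≤ n) (hd : 2 ≤ d)
    (Ψ : (Fin n → Fin d) → ℂ) :
    ∃ U : Fin n → Matrix (Fin d) (Fin d) ℂ,
      (∀ r, U r ∈ Matrix.unitaryGroup (Fin d) ℂ) ∧
      ∀ i j : Fin d, i < j → ∀ r : Fin n,
        (∑ J : Fin n → Fin d,
            (∏ s, (starRingEnd ℂ) (U s (J s) (Function.update (fun _ => i) r j s))) * Ψ J)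
          = 0 := by
  classical
  set A : Fin n → Matrix (Fin d) (Fin d) ℂ :=
    fun r => Matrix.of fun a t => cols Ψ (t : ℕ) r a with hA
  refine ⟨A, ?_, ?_⟩
  · intro r
    rw [Matrix.mem_unitaryGroup_iff']
    ext t t'
    rw [Matrix.mul_apply, Matrix.one_apply]
    have : ∀ a, (star (A r)) t a * (A r) a t' =
        (starRingEnd ℂ) (cols Ψ (t : ℕ) r a) * cols Ψ (t' : ℕ) r a := by
      intro a
      rfl
    rw [Finset.sum_congr rfl fun a _ => this a]
    have horth := cols_orthonormal Ψ r (t := (t : ℕ)) (t' := (t' : ℕ)) t.isLt t'.isLt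
    rw [PiLp.inner_apply] at horth
    simp only [RCLike.inner_apply] at horth
    rw [show (∑ a, (starRingEnd ℂ) (cols Ψ (t : ℕ) r a) * cols Ψ (t' : ℕ) r a) =
        ∑ a, cols Ψ (t' : ℕ) r a * (starRingEnd ℂ) (cols Ψ (t : ℕ) r a) from
        Finset.sum_congr rfl fun a _ => mul_comm _ _, horth]
    have : ((t : ℕ) = (t' : ℕ)) ↔ (t = t') := Fin.val_eq_val t t'
    by_cases h : t = t'
    · rw [if_pos h, if_pos (this.2 h)]
    · rw [if_neg h, if_neg (fun hh => h (this.1 hh))]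
  · intro i j hij r
    have hij' : (i : ℕ) < (j : ℕ) := hij
    have hzero := cols_inner_zero Ψ hij' j.isLt r
    rw [← hzero]
    unfold Gfun
    refine Finset.sum_congr rfl fun J _ => ?_
    congr 1
    refine Finset.prod_congr rfl fun s _ => ?_
    congr 1
    rcases eq_or_ne s r with h | h
    · subst h
      rw [Function.update_self, Function.update_self]
      rfl
    · rw [Function.update_of_ne h, Function.update_of_ne h]
      rfl
end

section
/- Let 2 ≤ d₁ ≤ ⋯ ≤ dₙ. Then (d₁−1)Σ_{s=1}^n d_s + Σ_{r=1}^{n−2}(d_{r+1}−d_r)Σ_{s=r+1}^n d_s − n·S₁ − Σ_{r=1}^{n−2}(n−r)(S_{r+1}−S_r) = (1/2)Σ_{r=1}^n d_r(d_r−1) − (1/2)δ(δ+1), where S_r = d_r(d_r−1)/2 and δ = dₙ − d_{n−1}. -/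
open Finset

/-- Telescoping sum over `Icc 1 m`. -/
lemma tel_aux (f : ℕ → ℚ) : ∀ m : ℕ, ∑ r ∈ Icc 1 m, (f (r + 1) - f r) = f (m + 1) - f 1 := by
  intro m
  induction m with
  | zero => simp
  | succ k ih =>
      rw [Finset.sum_Icc_succ_top (by omega), ih]; ring

lemma key_aux (e : ℕ → ℚ) : ∀ m : ℕ,
    (e 1 - 1) * (∑ s ∈ Icc 1 (m + 3), e s)
      + (∑ r ∈ Icc 1 (m + 1), (e (r + 1) - e r) * ∑ s ∈ Icc (r + 1) (m + 3), e s)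
      - ((m : ℚ) + 3) * (e 1 * (e 1 - 1) / 2)
      - (∑ r ∈ Icc 1 (m + 1),
          (((m : ℚ) + 3) - (r : ℚ)) *
            (e (r + 1) * (e (r + 1) - 1) / 2 - e r * (e r - 1) / 2))
      = (1 / 2) * (∑ r ∈ Icc 1 (m + 3), e r * (e r - 1))
        - (1 / 2) * ((e (m + 3) - e (m + 2)) * ((e (m + 3) - e (m + 2)) + 1)) := by
  intro m
  induction m with
  | zero =>
      have e1 : Finset.Icc 1 3 = {1, 2, 3} := by decide
      have e2 : Finset.Icc 1 1 = {1} := by decide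
      have e3 : Finset.Icc 2 3 = {2, 3} := by decide
      simp only [Nat.zero_add, Nat.cast_zero, e1, e2]
      simp
      simp [e3]
      ring
  | succ k ih =>
      have h1 : ∑ s ∈ Icc 1 (k + 1 + 3), e s = (∑ s ∈ Icc 1 (k + 3), e s) + e (k + 4) :=
        Finset.sum_Icc_succ_top (by omega) _
      have hB : ∑ r ∈ Icc 1 (k + 1 + 1), (e (r + 1) - e r) * ∑ s ∈ Icc (r + 1) (k + 1 + 3), e s
          = (∑ r ∈ Icc 1 (k + 1), (e (r + 1) - e r) * ∑ s ∈ Icc (r + 1) (k + 3), e s)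
            + (e (k + 3) - e (k + 2)) * e (k + 3) + e (k + 4) * (e (k + 3) - e 1) := by
        have hsplit : ∀ r ∈ Icc 1 (k + 2),
            (e (r + 1) - e r) * ∑ s ∈ Icc (r + 1) (k + 4), e s
              = (e (r + 1) - e r) * (∑ s ∈ Icc (r + 1) (k + 3), e s)
                + (e (r + 1) - e r) * e (k + 4) := by
          intro r hr
          rw [Finset.sum_Icc_succ_top (by simp at hr; omega)]; ring
        rw [show k + 1 + 1 = k + 2 from rfl, show k + 1 + 3 = k + 4 from rfl,
          Finset.sum_congr rfl hsplit, Finset.sum_add_distrib, ← Finset.sum_mul,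
          tel_aux e (k + 2), Finset.sum_Icc_succ_top (show 1 ≤ k + 2 by omega)]
        rw [show k + 2 + 1 = k + 3 from rfl, Finset.Icc_self, Finset.sum_singleton]
        ring
      have hD : ∑ r ∈ Icc 1 (k + 1 + 1),
            (((k : ℚ) + 1 + 3) - (r : ℚ)) *
              (e (r + 1) * (e (r + 1) - 1) / 2 - e r * (e r - 1) / 2)
          = (∑ r ∈ Icc 1 (k + 1),
              (((k : ℚ) + 3) - (r : ℚ)) *
                (e (r + 1) * (e (r + 1) - 1) / 2 - e r * (e r - 1) / 2))
            + (e (k + 3) * (e (k + 3) - 1) / 2 - e (k + 2) * (e (k + 2) - 1) / 2)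
            + (e (k + 3) * (e (k + 3) - 1) / 2 - e 1 * (e 1 - 1) / 2) := by
        have hsplit : ∀ r ∈ Icc 1 (k + 2),
            (((k : ℚ) + 1 + 3) - (r : ℚ)) *
              (e (r + 1) * (e (r + 1) - 1) / 2 - e r * (e r - 1) / 2)
              = (((k : ℚ) + 3) - (r : ℚ)) *
                  (e (r + 1) * (e (r + 1) - 1) / 2 - e r * (e r - 1) / 2)
                + (e (r + 1) * (e (r + 1) - 1) / 2 - e r * (e r - 1) / 2) := by
          intro r _; ring
        rw [show k + 1 + 1 = k + 2 from rfl, Finset.sum_congr rfl hsplit,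
          Finset.sum_add_distrib, tel_aux (fun r => e r * (e r - 1) / 2) (k + 2),
          Finset.sum_Icc_succ_top (show 1 ≤ k + 2 by omega)]
        push_cast
        ring
      have h2 : ∑ r ∈ Icc 1 (k + 1 + 3), e r * (e r - 1)
          = (∑ r ∈ Icc 1 (k + 3), e r * (e r - 1)) + e (k + 4) * (e (k + 4) - 1) :=
        Finset.sum_Icc_succ_top (by omega) _
      push_cast
      rw [h1, hB, hD, h2]
      push_cast at ih
      linear_combination ih

/-- The zero-coefficient counting identity from Theorem 2: with
`S_r = d_r(d_r−1)/2` and `δ = dₙ − d_{n−1}`,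
`(d₁−1)Σ_{s=1}^n d_s + Σ_{r=1}^{n−2}(d_{r+1}−d_r)Σ_{s=r+1}^n d_s − n S₁
 − Σ_{r=1}^{n−2}(n−r)(S_{r+1}−S_r) = ½Σ_{r=1}^n d_r(d_r−1) − ½δ(δ+1)`. -/
theorem zero_coefficient_count_identity (n : ℕ) (hn : 3 ≤ n)
    (d : ℕ → ℕ) (hd1 : 2 ≤ d 1)
    (hmono : ∀ r, 1 ≤ r → r < n → d r ≤ d (r + 1)) :
    ((d 1 : ℚ) - 1) * (∑ s ∈ Finset.Icc 1 n, (d s : ℚ))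
      + (∑ r ∈ Finset.Icc 1 (n - 2),
          ((d (r + 1) : ℚ) - (d r : ℚ)) * ∑ s ∈ Finset.Icc (r + 1) n, (d s : ℚ))
      - n * ((d 1 : ℚ) * ((d 1 : ℚ) - 1) / 2)
      - (∑ r ∈ Finset.Icc 1 (n - 2),
          ((n : ℚ) - (r : ℚ)) *
            ((d (r + 1) : ℚ) * ((d (r + 1) : ℚ) - 1) / 2
              - (d r : ℚ) * ((d r : ℚ) - 1) / 2))
      = (1 / 2) * (∑ r ∈ Finset.Icc 1 n, (d r : ℚ) * ((d r : ℚ) - 1))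
        - (1 / 2) * (((d n : ℚ) - (d (n - 1) : ℚ))
            * (((d n : ℚ) - (d (n - 1) : ℚ)) + 1)) := by
  obtain ⟨m, rfl⟩ : ∃ m, n = m + 3 := ⟨n - 3, by omega⟩
  have h := key_aux (fun r => (d r : ℚ)) m
  simp only [show m + 3 - 2 = m + 1 from rfl, show m + 3 - 1 = m + 2 from rfl]
  push_cast
  push_cast at h
  linear_combination h
end
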